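/- Let m ≥ 1, let O ⊆ ℝ^m be a nonempty open convex set, and let f : O → ℝ be convex. Then f is lower-C² at every point of O; that is, for every x̄ ∈ O there exist an open neighbourhood V of x̄ with V ⊆ O, a compact topological space T, and a family of functions (f_t)_{t∈T} forming a lower-C² representation of f on V. -/

import Mathlib

/-!
A convex function on an open set of a finite-dimensional space is continuous, hence bounded
on a closed ball around `x̄`. By Hahn–Banach, every point `x` of a smaller ball carries a
subgradient `g`, and the bound on `f` bounds `‖g‖` uniformly in `x`. Hence the affine minorants
`y ↦ ⟪g, y⟫ + b` of `f` on that ball with `(g, b)` in a large closed ball form a compact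
family whose maximum is `f`, attained at `x` by the subgradient minorant. Affine functions are
smooth with constant gradient and zero Hessian, so all continuity requirements are immediate.
-/

open scoped RealInnerProductSpace

/-- `(ft t)_{t ∈ T}` is a lower-C² representation of `f` on the set `V`: each `ft t`
is C² on `V`, the values, gradients and Hessians depend continuously on
`(t, x) ∈ T × V`, and `f = max_{t ∈ T} ft t` on `V` (the maximum being attained). -/
def IsLowerC2Rep {m : ℕ} (T : Type) [TopologicalSpace T]
    (f : EuclideanSpace ℝ (Fin m) → ℝ)
    (ft : T → EuclideanSpace ℝ (Fin m) → ℝ)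
    (V : Set (EuclideanSpace ℝ (Fin m))) : Prop :=
  (∀ t : T, ContDiffOn ℝ 2 (ft t) V) ∧
  ContinuousOn (fun p : T × EuclideanSpace ℝ (Fin m) => ft p.1 p.2)
    (Set.univ ×ˢ V) ∧
  ContinuousOn (fun p : T × EuclideanSpace ℝ (Fin m) => gradient (ft p.1) p.2)
    (Set.univ ×ˢ V) ∧
  ContinuousOn
    (fun p : T × EuclideanSpace ℝ (Fin m) => fderiv ℝ (gradient (ft p.1)) p.2)
    (Set.univ ×ˢ V) ∧
  (∀ x ∈ V, (∀ t : T, ft t x ≤ f x) ∧ (∃ t : T, ft t x = f x))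

open Metric Set

theorem IsOpen.strict_epigraph {α β : Type*} [TopologicalSpace α] [TopologicalSpace β]
    [LinearOrder β] [OrderClosedTopology β] {s : Set α} {f : α → β} (hs : IsOpen s)
    (hf : ContinuousOn f s) : IsOpen {p : α × β | p.1 ∈ s ∧ f p.1 < p.2} := by
  convert ((hf.comp continuousOn_fst fun _ hp ↦ hp.1).prodMk continuousOn_snd)
    |>.isOpen_inter_preimage (hs.prod isOpen_univ) (isOpen_lt continuous_fst continuous_snd)
    using 1
  ext p
  simp

section NormedSpace

variable {E : Type*} [NormedAddCommGroup E] [NormedSpace ℝ E] {O : Set E} {f : E → ℝ}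

theorem ConvexOn.exists_subgradient (hf : ConvexOn ℝ O f) (hO : IsOpen O)
    (hfc : ContinuousOn f O) {x : E} (hx : x ∈ O) :
    ∃ φ : StrongDual ℝ E, ∀ y ∈ O, f x + φ (y - x) ≤ f y := by
  -- Separate `(x, f x)` from the open convex strict epigraph, then normalise the separating
  -- functional by its vertical slope, which is negative.
  obtain ⟨L, hL⟩ := geometric_hahn_banach_open_point hf.convex_strict_epigraph
    (hO.strict_epigraph hfc) (x := (x, f x)) fun h ↦ lt_irrefl _ h.2
  have hsplit (y : E) (z : ℝ) : L (y, z) = L (y, 0) + z * L (0, 1) := by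
    rw [← smul_eq_mul, ← map_smul, ← map_add]
    simp
  have hc : L (0, 1) < 0 := by
    have := hL (x, f x + 1) ⟨hx, lt_add_one _⟩
    rw [hsplit x (f x + 1), hsplit x (f x)] at this
    linarith
  refine ⟨(-L (0, 1))⁻¹ • L.comp (.inl ℝ E ℝ), fun y hy ↦
    le_of_forall_gt_imp_ge_of_dense fun z hz ↦ ?_⟩
  have := hL (y, z) ⟨hy, hz⟩
  rw [hsplit y z, hsplit x (f x)] at this
  have hLsub : L (y - x, 0) = L (y, 0) - L (x, 0) := by
    rw [← map_sub, Prod.mk_sub_mk, sub_zero]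
  simp only [FunLike.coe_smul, ContinuousLinearMap.coe_comp, Pi.smul_apply,
    Function.comp_apply, ContinuousLinearMap.inl_apply, smul_eq_mul, hLsub]
  rw [← le_sub_iff_add_le', inv_mul_le_iff₀ (by linarith)]
  nlinarith

end NormedSpace

section InnerProductSpace

variable {E : Type*} [NormedAddCommGroup E] [InnerProductSpace ℝ E] {O : Set E} {f : E → ℝ}

theorem ConvexOn.exists_inner_subgradient [CompleteSpace E] (hf : ConvexOn ℝ O f)
    (hO : IsOpen O) (hfc : ContinuousOn f O) {x : E} (hx : x ∈ O) :
    ∃ g : E, ∀ y ∈ O, f x + ⟪g, y - x⟫ ≤ f y := by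
  obtain ⟨φ, hφ⟩ := hf.exists_subgradient hO hfc hx
  exact ⟨(InnerProductSpace.toDual ℝ E).symm φ, by simpa using hφ⟩

theorem mul_norm_le_of_forall_inner_le {g : E} {ρ A : ℝ} (hρ : 0 ≤ ρ)
    (h : ∀ v : E, ‖v‖ ≤ ρ → ⟪g, v⟫ ≤ A) : ρ * ‖g‖ ≤ A := by
  rcases eq_or_ne g 0 with rfl | hg
  · simpa using h 0 (by simpa using hρ)
  have hg' : 0 < ‖g‖ := norm_pos_iff.2 hg
  convert h ((ρ / ‖g‖) • g) (by rw [norm_smul, Real.norm_of_nonneg (by positivity),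
    div_mul_cancel₀ _ hg'.ne']) using 1
  rw [real_inner_smul_right, real_inner_self_eq_norm_sq]
  field_simp

theorem hasGradientAt_inner_add_const [CompleteSpace E] (a : E) (b : ℝ) (x : E) :
    HasGradientAt (fun y ↦ ⟪a, y⟫ + b) a x := by
  rw [hasGradientAt_iff_hasFDerivAt]
  exact ((InnerProductSpace.toDual ℝ E a).hasFDerivAt (x := x)).add_const b

def affineMinorants (f : E → ℝ) (s : Set E) : Set (E × ℝ) :=
  {p | ∀ y ∈ s, ⟪p.1, y⟫ + p.2 ≤ f y}

theorem isClosed_affineMinorants (f : E → ℝ) (s : Set E) : IsClosed (affineMinorants f s) := by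
  simp only [affineMinorants, ofPred_forall]
  exact isClosed_biInter fun y _ ↦ isClosed_le (by fun_prop) continuous_const

variable [FiniteDimensional ℝ E]

theorem ConvexOn.exists_inner_subgradient_norm_le (hf : ConvexOn ℝ O f) (hO : IsOpen O)
    {x : E} {ρ M : ℝ} (hρ : 0 < ρ) (hball : closedBall x ρ ⊆ O)
    (hM : ∀ y ∈ closedBall x ρ, |f y| ≤ M) :
    ∃ g : E, ‖g‖ ≤ 2 * M / ρ ∧ ∀ y ∈ O, f x + ⟪g, y - x⟫ ≤ f y := by
  have hx : x ∈ O := hball (mem_closedBall_self hρ.le)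
  obtain ⟨g, hg⟩ := hf.exists_inner_subgradient hO (hf.continuousOn hO) hx
  refine ⟨g, ?_, hg⟩
  rw [le_div_iff₀ hρ, mul_comm]
  refine mul_norm_le_of_forall_inner_le hρ.le fun v hv ↦ ?_
  have hy : x + v ∈ closedBall x ρ := by simpa using hv
  have := hg (x + v) (hball hy)
  rw [add_sub_cancel_left] at this
  linarith [abs_le.1 (hM _ hy), abs_le.1 (hM x (mem_closedBall_self hρ.le))]

theorem ConvexOn.exists_bounded_affineMinorants (hf : ConvexOn ℝ O f) (hO : IsOpen O)
    {x₀ : E} (hx₀ : x₀ ∈ O) :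
    ∃ r > 0, ball x₀ r ⊆ O ∧ ∃ R, ∀ x ∈ ball x₀ r,
      ∃ p ∈ closedBall (0 : E × ℝ) R ∩ affineMinorants f (ball x₀ r), ⟪p.1, x⟫ + p.2 = f x := by
  obtain ⟨r, hr, hK⟩ : ∃ r > 0, closedBall x₀ (2 * r) ⊆ O := by
    obtain ⟨ε, hε, h⟩ := nhds_basis_closedBall.mem_iff.1 (hO.mem_nhds hx₀)
    exact ⟨ε / 2, by positivity, by rwa [mul_div_cancel₀ _ two_ne_zero]⟩
  obtain ⟨M, hM⟩ := (isCompact_closedBall x₀ (2 * r)).exists_bound_of_continuousOn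
    ((hf.continuousOn hO).mono hK)
  have hVK : ball x₀ r ⊆ closedBall x₀ (2 * r) :=
    ball_subset_closedBall.trans (closedBall_subset_closedBall (by linarith))
  refine ⟨r, hr, hVK.trans hK, max (2 * M / r) (M + 2 * M / r * (‖x₀‖ + r)), fun x hx ↦ ?_⟩
  have hxr : closedBall x r ⊆ closedBall x₀ (2 * r) :=
    closedBall_subset_closedBall' (by linarith [mem_ball.1 hx])
  obtain ⟨g, hgC, hg⟩ := hf.exists_inner_subgradient_norm_le hO hr (hxr.trans hK)
    fun y hy ↦ hM y (hxr hy)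
  have hfx : |f x| ≤ M := hM x (hVK hx)
  have hx_norm : ‖x‖ ≤ ‖x₀‖ + r := by
    linarith [norm_le_norm_add_norm_sub' x x₀, mem_ball_iff_norm.1 hx]
  refine ⟨(g, f x - ⟪g, x⟫), ⟨?_, fun y hy ↦ ?_⟩, by ring⟩
  · rw [mem_closedBall_zero_iff, Prod.norm_def, max_le_iff, Real.norm_eq_abs]
    refine ⟨le_max_of_le_left hgC, le_max_of_le_right ?_⟩
    calc |f x - ⟪g, x⟫| ≤ |f x| + |⟪g, x⟫| := abs_sub _ _
      _ ≤ M + 2 * M / r * (‖x₀‖ + r) := add_le_add hfx <| (abs_real_inner_le_norm g x).trans <|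
          mul_le_mul hgC hx_norm (norm_nonneg x) ((norm_nonneg g).trans hgC)
  · have := hg y (hVK.trans hK hy)
    rw [inner_sub_right] at this
    linarith

end InnerProductSpace

theorem isLowerC2Rep_of_affineMinorants {m : ℕ} {f : EuclideanSpace ℝ (Fin m) → ℝ}
    {V : Set (EuclideanSpace ℝ (Fin m))} {S : Set (EuclideanSpace ℝ (Fin m) × ℝ)}
    (hS : S ⊆ affineMinorants f V) (hmax : ∀ x ∈ V, ∃ p ∈ S, ⟪p.1, x⟫ + p.2 = f x) :
    IsLowerC2Rep S f (fun p x ↦ ⟪p.1.1, x⟫ + p.1.2) V := by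
  have hgrad (p : S) : gradient (fun x ↦ ⟪p.1.1, x⟫ + p.1.2) = fun _ ↦ p.1.1 :=
    funext fun x ↦ (hasGradientAt_inner_add_const _ _ x).gradient
  refine ⟨fun p ↦ ((contDiff_const.inner ℝ contDiff_id).add contDiff_const).contDiffOn,
    by fun_prop, ?_, ?_, fun x hx ↦ ⟨fun p ↦ hS p.2 x hx, ?_⟩⟩
  · simp only [hgrad]
    fun_prop
  · simp only [hgrad, fderiv_fun_const, Pi.zero_apply]
    exact continuousOn_const
  · obtain ⟨p, hp, hpx⟩ := hmax x hx
    exact ⟨⟨p, hp⟩, hpx⟩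

theorem convex_is_lowerC2_general {m : ℕ}
    (O : Set (EuclideanSpace ℝ (Fin m))) (hOopen : IsOpen O)
    (f : EuclideanSpace ℝ (Fin m) → ℝ) (hf : ConvexOn ℝ O f) :
    ∀ xbar ∈ O, ∃ V : Set (EuclideanSpace ℝ (Fin m)),
      IsOpen V ∧ xbar ∈ V ∧ V ⊆ O ∧
      ∃ (T : Type) (instT : TopologicalSpace T),
        @CompactSpace T instT ∧
        ∃ ft : T → EuclideanSpace ℝ (Fin m) → ℝ,
          @IsLowerC2Rep m T instT f ft V := by
  intro xbar hxbar
  obtain ⟨r, hr, hVO, R, hR⟩ := hf.exists_bounded_affineMinorants hOopen hxbar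
  have hT : IsCompact (closedBall 0 R ∩ affineMinorants f (ball xbar r)) :=
    (isCompact_closedBall 0 R).inter_right (isClosed_affineMinorants f _)
  exact ⟨ball xbar r, isOpen_ball, mem_ball_self hr, hVO, _, _, isCompact_iff_compactSpace.1 hT,
    _, isLowerC2Rep_of_affineMinorants inter_subset_right hR⟩

theorem convex_is_lowerC2 {m : ℕ} (hm : 1 ≤ m)
    (O : Set (EuclideanSpace ℝ (Fin m))) (hOne : O.Nonempty) (hOopen : IsOpen O)
    (hOconv : Convex ℝ O)
    (f : EuclideanSpace ℝ (Fin m) → ℝ) (hf : ConvexOn ℝ O f) :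
    ∀ xbar ∈ O, ∃ V : Set (EuclideanSpace ℝ (Fin m)),
      IsOpen V ∧ xbar ∈ V ∧ V ⊆ O ∧
      ∃ (T : Type) (instT : TopologicalSpace T),
        @CompactSpace T instT ∧
        ∃ ft : T → EuclideanSpace ℝ (Fin m) → ℝ,
          @IsLowerC2Rep m T instT f ft V :=
  convex_is_lowerC2_general O hOopen f hf
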